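/- Let G and H be finite groups and k a field whose characteristic does not divide |G| − |H|. Then the universal comeasuring algebra A_{k[G],k[H]} between the Frobenius group algebras k[H] and k[G] is the zero algebra. Concretely: in any unital k-algebra Q equipped with a comeasuring of Frobenius algebras ρ : k[H] → k[G] ⊗ Q, one has |G|·1_Q = |H|·1_Q, hence 1_Q = 0 when char k ∤ (|G|−|H|), so Q = 0. -/

import Mathlib

open TensorProduct

/-- A comeasuring of Frobenius algebras from `(A, Δ_A, ν_A)` to `(B, Δ_B, ν_B)` with
coefficient algebra `Q`: a linear map `ρ : A → B ⊗ Q`, `ρ(a) = a⁽⁰⁾ ⊗ a⁽¹⁾`, which is an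
algebra map and satisfies
`a^{(1)[0]} ⊗ a^{(2)[0]} ⊗ a^{(1)[1]}a^{(2)[1]} = a^{[0](1)} ⊗ a^{[0](2)} ⊗ a^{[1]}`
and `ν_B(a⁽⁰⁾)a⁽¹⁾ = ν_A(a)1_Q`. -/
def IsFrobComeasuring {k A B Q : Type*} [CommRing k] [Ring A] [Algebra k A]
    [Ring B] [Algebra k B] [Ring Q] [Algebra k Q]
    (ΔA : A →ₗ[k] A ⊗[k] A) (νA : A →ₗ[k] k)
    (ΔB : B →ₗ[k] B ⊗[k] B) (νB : B →ₗ[k] k)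
    (ρ : A →ₗ[k] B ⊗[k] Q) : Prop :=
  (∀ a a' : A, ρ (a * a') = ρ a * ρ a') ∧
  (ρ 1 = 1) ∧
  (∀ a : A,
    TensorProduct.map (LinearMap.id : B ⊗[k] B →ₗ[k] B ⊗[k] B) (LinearMap.mul' k Q)
        (TensorProduct.tensorTensorTensorComm k B Q B Q
          (TensorProduct.map ρ ρ (ΔA a)))
      = TensorProduct.map ΔB (LinearMap.id : Q →ₗ[k] Q) (ρ a)) ∧
  (∀ a : A,
    TensorProduct.lid k Q
        (TensorProduct.map νB (LinearMap.id : Q →ₗ[k] Q) (ρ a)) = νA a • (1 : Q))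

section GroupFrobenius

variable (k : Type*) [Field k] (G : Type*) [Group G] [Fintype G] [DecidableEq G]

/-- The Frobenius comultiplication `Δ(g) = Σ_{h ∈ G} gh⁻¹ ⊗ h` on a finite group
algebra. -/
noncomputable def groupComul :
    MonoidAlgebra k G →ₗ[k] MonoidAlgebra k G ⊗[k] MonoidAlgebra k G :=
  (Finsupp.lsum k fun g =>
    LinearMap.toSpanSingleton k (MonoidAlgebra k G ⊗[k] MonoidAlgebra k G)
      (∑ h : G, MonoidAlgebra.single (g * h⁻¹) (1 : k) ⊗ₜ[k] MonoidAlgebra.single h (1 : k)))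
    ∘ₗ (MonoidAlgebra.coeffLinearEquiv k).toLinearMap

/-- The Frobenius counit `ν(g) = δ_{g,1}` on a finite group algebra. -/
noncomputable def groupCounit : MonoidAlgebra k G →ₗ[k] k :=
  Finsupp.lapply (1 : G) ∘ₗ (MonoidAlgebra.coeffLinearEquiv k).toLinearMap

end GroupFrobenius

/-!
Apply `(ν_B ∘ μ_B) ⊗ id` to the comultiplication axiom at `a = 1`. Since `ρ` is multiplicative
and compatible with the counits, the left side becomes `ν_A(μ_A(Δ_A 1)) • 1`; since `ρ 1 = 1`,
the right side is `ν_B(μ_B(Δ_B 1)) • 1`. In a group algebra `μ(Δ 1) = Σ_g g⁻¹g = |G|`, so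
`|H|·1_Q = |G|·1_Q`, while `|G| - |H|` is invertible in `k`.
-/

section Comeasuring

variable {k A B Q : Type*} [CommRing k] [Ring A] [Algebra k A] [Ring B] [Algebra k B]
  [Ring Q] [Algebra k Q]

lemma mul'_map_of_map_mul {ρ : A →ₗ[k] B ⊗[k] Q}
    (hmul : ∀ a a' : A, ρ (a * a') = ρ a * ρ a') (z : A ⊗[k] A) :
    LinearMap.mul' k (B ⊗[k] Q) (map ρ ρ z) = ρ (LinearMap.mul' k A z) :=
  LinearMap.congr_fun (f := LinearMap.mul' k (B ⊗[k] Q) ∘ₗ map ρ ρ)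
    (g := ρ ∘ₗ LinearMap.mul' k A) (ext' fun a a' => by simp [hmul]) z

lemma lid_map_counit_mul'_tensorTensorTensorComm (ν : B →ₗ[k] k)
    (w : (B ⊗[k] Q) ⊗[k] (B ⊗[k] Q)) :
    TensorProduct.lid k Q (map (ν ∘ₗ LinearMap.mul' k B) LinearMap.id
      (map LinearMap.id (LinearMap.mul' k Q) (tensorTensorTensorComm k B Q B Q w))) =
    TensorProduct.lid k Q (map ν LinearMap.id (LinearMap.mul' k (B ⊗[k] Q) w)) := by
  rw [LinearMap.mul'_tensor, LinearMap.comp_apply, LinearEquiv.coe_coe,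
    ← LinearMap.comp_apply (map ν LinearMap.id), ← map_comp,
    ← LinearMap.comp_apply (map _ LinearMap.id), ← map_comp]
  rfl

theorem IsFrobComeasuring.counit_mul'_comul_one_smul_one
    {ΔA : A →ₗ[k] A ⊗[k] A} {νA : A →ₗ[k] k}
    {ΔB : B →ₗ[k] B ⊗[k] B} {νB : B →ₗ[k] k} {ρ : A →ₗ[k] B ⊗[k] Q}
    (hρ : IsFrobComeasuring ΔA νA ΔB νB ρ) :
    νA (LinearMap.mul' k A (ΔA 1)) • (1 : Q) = νB (LinearMap.mul' k B (ΔB 1)) • 1 := by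
  obtain ⟨hmul, hone, hcomul, hcounit⟩ := hρ
  calc νA (LinearMap.mul' k A (ΔA 1)) • (1 : Q)
      = TensorProduct.lid k Q
          (map νB LinearMap.id (LinearMap.mul' k (B ⊗[k] Q) (map ρ ρ (ΔA 1)))) := by
        rw [mul'_map_of_map_mul hmul, hcounit]
    _ = TensorProduct.lid k Q
          (map (νB ∘ₗ LinearMap.mul' k B) LinearMap.id (map ΔB LinearMap.id (ρ 1))) := by
        rw [← hcomul, lid_map_counit_mul'_tensorTensorTensorComm]
    _ = νB (LinearMap.mul' k B (ΔB 1)) • (1 : Q) := by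
        simp [hone, Algebra.TensorProduct.one_def]

end Comeasuring

section GroupAlgebra

variable (k : Type*) [Field k] (G : Type*) [Group G]

lemma groupComul_single_one [Fintype G] (g : G) :
    groupComul k G (MonoidAlgebra.single g 1) =
      ∑ h : G, MonoidAlgebra.single (g * h⁻¹) (1 : k) ⊗ₜ[k] MonoidAlgebra.single h 1 := by
  simp [groupComul, MonoidAlgebra.coeffLinearEquiv]

lemma groupCounit_one : groupCounit k G 1 = 1 := by
  simp [groupCounit, MonoidAlgebra.coeffLinearEquiv, MonoidAlgebra.one_def]

lemma groupCounit_mul'_groupComul_one [Fintype G] :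
    groupCounit k G (LinearMap.mul' k (MonoidAlgebra k G) (groupComul k G 1)) =
      Fintype.card G := by
  rw [MonoidAlgebra.one_def, groupComul_single_one, map_sum, map_sum]
  simp only [LinearMap.mul'_apply, MonoidAlgebra.single_mul_single, one_mul, inv_mul_cancel]
  simp [← MonoidAlgebra.one_def, groupCounit_one]

end GroupAlgebra

theorem group_comeasuring_trivial_general {k : Type*} [Field k]
    {G : Type*} [Group G] [Fintype G]
    {H : Type*} [Group H] [Fintype H]
    (hchar : ¬ ((ringChar k : ℤ) ∣ (Fintype.card G : ℤ) - (Fintype.card H : ℤ)))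
    (Q : Type*) [Ring Q] [Algebra k Q]
    (ρ : MonoidAlgebra k H →ₗ[k] MonoidAlgebra k G ⊗[k] Q)
    (hρ : IsFrobComeasuring (groupComul k H) (groupCounit k H)
      (groupComul k G) (groupCounit k G) ρ) :
    (Fintype.card G : Q) = (Fintype.card H : Q) ∧ Subsingleton Q := by
  have hcard : (Fintype.card G : Q) = Fintype.card H := by
    simpa [groupCounit_mul'_groupComul_one, Nat.cast_smul_eq_nsmul] using
      hρ.counit_mul'_comul_one_smul_one.symm
  have hk : (Fintype.card G : k) - Fintype.card H ≠ 0 := by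
    rwa [← CharP.intCast_eq_zero_iff k (ringChar k), Int.cast_sub, Int.cast_natCast,
      Int.cast_natCast] at hchar
  refine ⟨hcard, not_nontrivial_iff_subsingleton.mp fun hQ => hk ?_⟩
  exact (algebraMap k Q).injective (by simp [hcard])

/-- If `G` and `H` are finite groups and `char k` does not divide `|G| − |H|`, then any
unital `k`-algebra `Q` carrying a comeasuring of Frobenius algebras
`ρ : k[H] → k[G] ⊗ Q` satisfies `|G|·1_Q = |H|·1_Q` and `1_Q = 0`, i.e. `Q = 0`; in
particular the universal comeasuring algebra between these group Frobenius algebras is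
zero. -/
theorem group_comeasuring_trivial {k : Type*} [Field k]
    {G : Type*} [Group G] [Fintype G] [DecidableEq G]
    {H : Type*} [Group H] [Fintype H] [DecidableEq H]
    (hchar : ¬ ((ringChar k : ℤ) ∣ (Fintype.card G : ℤ) - (Fintype.card H : ℤ)))
    (Q : Type*) [Ring Q] [Algebra k Q]
    (ρ : MonoidAlgebra k H →ₗ[k] MonoidAlgebra k G ⊗[k] Q)
    (hρ : IsFrobComeasuring (groupComul k H) (groupCounit k H)
      (groupComul k G) (groupCounit k G) ρ) :
    (Fintype.card G : Q) = (Fintype.card H : Q) ∧ Subsingleton Q :=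
  group_comeasuring_trivial_general hchar Q ρ hρ
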